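/- Let R₀ be a domain, H an abelian torsion-free group, and (S̄,ω̄) an (R₀,H)-crossed system. Then every unit of the crossed product R₀ ×_{(S̄,ω̄)} H is homogeneous, i.e., of the form f d_h with f ∈ R₀^× and h ∈ H. -/

import Mathlib

/-!
Torsion-free abelian groups embed into their divisible hull, a `ℚ`-vector space, and therefore
have the two-unique-products property: whenever `#A * #B > 1`, at least two distinct pairs
`(a, b) ∈ A × B` are the only way of writing `a * b` as a product from `A` and `B`. For `f * g = d_e` in the crossed product, the coefficient
of `f * g` at such a unique product is a product of nonzero elements of the domain `R₀` (twisted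
by an automorphism and a unit), so it lies in the support `{e}` of `d_e`. Two different unique
pairs cannot both multiply to `e`, so `f` and `g` are homogeneous, `f = x d_a` and `g = y d_b`, and
then `x` has a right inverse; a domain is Dedekind-finite, so `x` is a unit.
-/

/-- An `(R₀, H)`-crossed system: maps `S̄ : H → Aut(R₀)` and `ω̄ : H × H → R₀ˣ`
satisfying the normalization conditions, the twisted-homomorphism condition
`S̄(h)S̄(h') = C(ω̄(h,h'))S̄(hh')`, and the cocycle condition
`ω̄(h,h')ω̄(hh',h'') = S̄(h)(ω̄(h',h''))ω̄(h,h'h'')`. -/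
structure CrossedSystem (R₀ : Type*) (H : Type*) [Ring R₀] [Group H] where
  S : H → R₀ ≃+* R₀
  ω : H → H → R₀ˣ
  S_one : S 1 = RingEquiv.refl R₀
  ω_one_right : ∀ h, ω h 1 = 1
  ω_one_left : ∀ h, ω 1 h = 1
  S_comp : ∀ h h' r, S h (S h' r) = (ω h h' : R₀) * S (h * h') r * ((ω h h')⁻¹ : R₀ˣ)
  cocycle : ∀ h h' h'',
    (ω h h' : R₀) * (ω (h * h') h'' : R₀) = S h (ω h' h'' : R₀) * (ω h (h' * h'') : R₀)

/-- The multiplication of the crossed product `R₀ ×_{(S̄,ω̄)} H = ⊕_{h ∈ H} R₀ d_h`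
(realized as finitely supported functions `H →₀ R₀`), determined on homogeneous
elements by `(f d_h) • (f' d_{h'}) = f · S̄(h)(f') · ω̄(h,h') d_{hh'}`. -/
noncomputable def crossedMul {R₀ : Type*} {H : Type*} [Ring R₀] [Group H]
    (c : CrossedSystem R₀ H) (f g : H →₀ R₀) : H →₀ R₀ :=
  f.sum fun h r => g.sum fun h' r' => Finsupp.single (h * h') (r * c.S h r' * c.ω h h')

open Finsupp

instance IsAddTorsionFree.twoUniqueSums {M : Type*} [AddCommGroup M] [IsAddTorsionFree M] :
    TwoUniqueSums M :=
  .of_injective_addHom (DivisibleHull.coeAddMonoidHom M).toAddHom DivisibleHull.coe_injective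
    inferInstance

instance IsMulTorsionFree.twoUniqueProds {G : Type*} [CommGroup G] [IsMulTorsionFree G] :
    TwoUniqueProds G :=
  Multiplicative.instTwoUniqueProdsOfTwoUniqueSums (M := Additive G)

section crossedMul

variable {R₀ H : Type*} [Ring R₀] [Group H] (c : CrossedSystem R₀ H)

theorem crossedMul_zero_left (g : H →₀ R₀) : crossedMul c 0 g = 0 :=
  sum_zero_index

theorem crossedMul_zero_right (f : H →₀ R₀) : crossedMul c f 0 = 0 := by
  simp [crossedMul]

theorem crossedMul_single_single (a b : H) (x y : R₀) :
    crossedMul c (single a x) (single b y) = single (a * b) (x * c.S a y * c.ω a b) := by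
  simp [crossedMul]

theorem crossedMul_apply [DecidableEq H] (f g : H →₀ R₀) (t : H) :
    crossedMul c f g t = ∑ p ∈ f.support ×ˢ g.support,
      if p.1 * p.2 = t then f p.1 * c.S p.1 (g p.2) * c.ω p.1 p.2 else 0 := by
  simp only [crossedMul, Finsupp.sum_apply, single_apply]
  rw [Finsupp.sum, Finset.sum_product]
  rfl

theorem crossedMul_apply_of_uniqueMul {f g : H →₀ R₀} {a b : H}
    (ha : a ∈ f.support) (hb : b ∈ g.support) (hu : UniqueMul f.support g.support a b) :
    crossedMul c f g (a * b) = f a * c.S a (g b) * c.ω a b := by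
  classical
  rw [crossedMul_apply, Finset.sum_eq_single_of_mem (a, b) (Finset.mem_product.mpr ⟨ha, hb⟩)]
  · simp
  · rintro ⟨x, y⟩ hxy hne
    rw [Finset.mem_product] at hxy
    refine if_neg fun hxyab => hne ?_
    obtain ⟨rfl, rfl⟩ := hu hxy.1 hxy.2 hxyab
    rfl

theorem mul_mem_support_crossedMul_of_uniqueMul [NoZeroDivisors R₀] {f g : H →₀ R₀} {a b : H}
    (ha : a ∈ f.support) (hb : b ∈ g.support) (hu : UniqueMul f.support g.support a b) :
    a * b ∈ (crossedMul c f g).support := by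
  rw [mem_support_iff, crossedMul_apply_of_uniqueMul c ha hb hu, Ne, Units.mul_left_eq_zero]
  refine mul_ne_zero (mem_support_iff.mp ha) ?_
  exact (map_ne_zero_iff _ (c.S a).injective).mpr (mem_support_iff.mp hb)

theorem card_support_mul_card_support_le_one [NoZeroDivisors R₀] [TwoUniqueProds H]
    {f g : H →₀ R₀} (h : (crossedMul c f g).support.card ≤ 1) :
    f.support.card * g.support.card ≤ 1 := by
  by_contra! hlt
  obtain ⟨p, hp, q, hq, hne, hpu, hqu⟩ := TwoUniqueProds.uniqueMul_of_one_lt_card hlt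
  rw [Finset.mem_product] at hp hq
  have hpq : p.1 * p.2 = q.1 * q.2 := Finset.card_le_one.mp h _
    (mul_mem_support_crossedMul_of_uniqueMul c hp.1 hp.2 hpu) _
    (mul_mem_support_crossedMul_of_uniqueMul c hq.1 hq.2 hqu)
  obtain ⟨h1, h2⟩ := hpu hq.1 hq.2 hpq.symm
  exact hne (Prod.ext h1.symm h2.symm)

theorem exists_eq_single_of_crossedMul_eq_single [NoZeroDivisors R₀] [TwoUniqueProds H]
    {f g : H →₀ R₀} {t : H} {r : R₀} (hr : r ≠ 0) (h : crossedMul c f g = single t r) :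
    ∃ a b x y, f = single a x ∧ g = single b y := by
  have hf : 0 < f.support.card := by
    rw [Nat.pos_iff_ne_zero, Ne, card_support_eq_zero]
    rintro rfl
    exact single_ne_zero.mpr hr (h.symm.trans (crossedMul_zero_left c g))
  have hg : 0 < g.support.card := by
    rw [Nat.pos_iff_ne_zero, Ne, card_support_eq_zero]
    rintro rfl
    exact single_ne_zero.mpr hr (h.symm.trans (crossedMul_zero_right c f))
  have hfg := card_support_mul_card_support_le_one c (by rw [h, support_single t hr]; rfl)
  obtain ⟨a, x, rfl⟩ := card_support_le_one'.mp ((Nat.le_mul_of_pos_right _ hg).trans hfg)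
  obtain ⟨b, y, rfl⟩ := card_support_le_one'.mp ((Nat.le_mul_of_pos_left _ hf).trans hfg)
  exact ⟨a, b, x, y, rfl, rfl⟩

end crossedMul

theorem statement12_general {R₀ : Type*} {H : Type*} [Ring R₀] [IsDomain R₀] [CommGroup H]
    (htf : ∀ g : H, g ≠ 1 → ¬IsOfFinOrder g) (c : CrossedSystem R₀ H)
    (f g : H →₀ R₀) (hfg : crossedMul c f g = Finsupp.single 1 1) :
    ∃ (h : H) (r : R₀), IsUnit r ∧ f = Finsupp.single h r := by
  have : IsMulTorsionFree H := isMulTorsionFree_iff_not_isOfFinOrder.mpr htf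
  obtain ⟨a, b, x, y, rfl, rfl⟩ := exists_eq_single_of_crossedMul_eq_single c one_ne_zero hfg
  rw [crossedMul_single_single, single_eq_single_iff] at hfg
  obtain ⟨-, hx⟩ | ⟨-, h10⟩ := hfg
  · exact ⟨a, x, IsUnit.of_mul_eq_one _ (by rw [← mul_assoc, hx]), rfl⟩
  · exact absurd h10 one_ne_zero

/-- If `R₀` is a domain, `H` is an abelian torsion-free group and
`(S̄,ω̄)` is an `(R₀,H)`-crossed system, then every unit of the crossed product
`R₀ ×_{(S̄,ω̄)} H` (an element with a two-sided inverse for `crossedMul`, whose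
identity is `d_e = single 1 1`) is homogeneous, i.e. of the form `f d_h` with
`f ∈ R₀ˣ` and `h ∈ H`. -/
theorem statement12 {R₀ : Type*} {H : Type*} [Ring R₀] [IsDomain R₀] [CommGroup H]
    (htf : ∀ g : H, g ≠ 1 → ¬IsOfFinOrder g) (c : CrossedSystem R₀ H)
    (f g : H →₀ R₀) (hfg : crossedMul c f g = Finsupp.single 1 1)
    (hgf : crossedMul c g f = Finsupp.single 1 1) :
    ∃ (h : H) (r : R₀), IsUnit r ∧ f = Finsupp.single h r :=
  statement12_general htf c f g hfg
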